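/- arXiv:1001.3106 — 2 statements merged into one kernel-verified Lean document; each statement's English description precedes it below -/
import Mathlib

section
/- Let Δ be a complete fan in ℝ^n with n ≥ 1, and let S = {x ∈ ℝ^n : ‖x‖ = 1}. Then: (i) the sets relint(σ) ∩ S, for nonzero σ ∈ Δ (where relint denotes the relative interior of σ, i.e., its interior inside its affine span), are nonempty, pairwise disjoint for distinct cones, and their union is all of S; (ii) for every nonzero σ ∈ Δ, the set (σ ∩ S) ∖ relint(σ) equals the union of the sets τ ∩ S over the nonzero proper faces τ of σ. (This expresses that the cells e_σ = σ ∩ S form a cellular decomposition of the sphere S.) -/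
open scoped RealInnerProductSpace

noncomputable section

abbrev Euc (n : ℕ) := EuclideanSpace ℝ (Fin n)

/-- A vector of `ℝ^n` has integral coordinates. -/
def IsIntegralVec {n : ℕ} (x : Euc n) : Prop := ∀ i, ∃ m : ℤ, x i = (m : ℝ)

/-- A rational polyhedral cone in `ℝ^n`. -/
def IsRatPolyCone {n : ℕ} (σ : Set (Euc n)) : Prop :=
  ∃ (k : ℕ) (v : Fin k → Euc n), (∀ i, IsIntegralVec (v i)) ∧
    σ = {x | ∃ lam : Fin k → ℝ, (∀ i, 0 ≤ lam i) ∧ x = ∑ i, lam i • v i}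

/-- Strict convexity of a cone: `σ ∩ (−σ) = {0}`. -/
def IsStrictlyConvexCone {n : ℕ} (σ : Set (Euc n)) : Prop := σ ∩ (-σ) = {0}

/-- The dual cone. -/
def dualCone {n : ℕ} (σ : Set (Euc n)) : Set (Euc n) := {u | ∀ x ∈ σ, 0 ≤ ⟪u, x⟫}

/-- The orthogonal of a cone. -/
def orthCone {n : ℕ} (σ : Set (Euc n)) : Set (Euc n) := {u | ∀ x ∈ σ, ⟪u, x⟫ = 0}

/-- `τ` is a face of `σ`. -/
def IsFaceOf {n : ℕ} (τ σ : Set (Euc n)) : Prop :=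
  ∃ u ∈ dualCone σ, τ = σ ∩ {x | ⟪u, x⟫ = 0}

/-- The dimension of a cone: the dimension of its linear span. -/
def coneDim {n : ℕ} (σ : Set (Euc n)) : ℕ := Module.finrank ℝ (Submodule.span ℝ σ)

/-- A fan in `ℝ^n`. -/
structure IsFan {n : ℕ} (Δ : Set (Set (Euc n))) : Prop where
  finite : Δ.Finite
  poly : ∀ σ ∈ Δ, IsRatPolyCone σ
  strictconv : ∀ σ ∈ Δ, IsStrictlyConvexCone σ
  face_mem : ∀ σ ∈ Δ, ∀ τ, IsFaceOf τ σ → τ ∈ Δ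
  inter_face : ∀ σ ∈ Δ, ∀ τ ∈ Δ, IsFaceOf (σ ∩ τ) σ ∧ IsFaceOf (σ ∩ τ) τ

/-- A complete fan: the union of the cones is everything. -/
def IsCompleteFan {n : ℕ} (Δ : Set (Set (Euc n))) : Prop :=
  IsFan Δ ∧ ⋃₀ Δ = Set.univ


/-! A point of a cone `σ` outside its relative interior is separated from that interior
(Hahn–Banach inside the span of `σ`) by a hyperplane through the origin, which cuts out a proper
face of `σ` containing the point. Conversely, a linear functional minimal at a relative interior
point is constant, so a face meeting the relative interior is the whole cone. With the fan axioms
this shows that every point lies in the relative interior of the smallest cone containing it, that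
relative interiors of distinct cones are disjoint, and that the relative boundary of a cone is the
union of its proper faces; the sphere only misses the cone `{0}`. -/

open Set Filter Topology

section IntrinsicInterior

variable {E : Type*} [NormedAddCommGroup E] [NormedSpace ℝ E] {s : Set E} {x y : E}

theorem mem_intrinsicInterior_iff_mem_nhdsWithin :
    x ∈ intrinsicInterior ℝ s ↔
      x ∈ (affineSpan ℝ s : Set E) ∧ s ∈ 𝓝[(affineSpan ℝ s : Set E)] x := by
  simp only [mem_intrinsicInterior, mem_interior_iff_mem_nhds]
  constructor
  · rintro ⟨⟨x, hx⟩, h, rfl⟩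
    exact ⟨hx, preimage_coe_mem_nhds_subtype.1 h⟩
  · rintro ⟨hx, h⟩
    exact ⟨⟨x, hx⟩, preimage_coe_mem_nhds_subtype.2 h, rfl⟩

theorem mem_intrinsicInterior_iff_mem_interior_of_affineSpan_eq {V : Submodule ℝ E}
    (hV : (affineSpan ℝ s : Set E) = V) (hx : x ∈ V) :
    x ∈ intrinsicInterior ℝ s ↔ (⟨x, hx⟩ : V) ∈ interior ((↑) ⁻¹' s : Set V) := by
  rw [mem_interior_iff_mem_nhds, mem_intrinsicInterior_iff_mem_nhdsWithin, hV,
    and_iff_right (SetLike.mem_coe.2 hx)]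
  exact (preimage_coe_mem_nhds_subtype (s := (V : Set E)) (a := ⟨x, hx⟩)).symm

theorem exists_pos_add_smul_sub_mem_of_mem_intrinsicInterior
    (hx : x ∈ intrinsicInterior ℝ s) (hy : y ∈ s) : ∃ t : ℝ, 0 < t ∧ x + t • (x - y) ∈ s := by
  obtain ⟨hxA, hs⟩ := mem_intrinsicInterior_iff_mem_nhdsWithin.1 hx
  have hline : Tendsto (fun t : ℝ => x + t • (x - y)) (𝓝 0) (𝓝[(affineSpan ℝ s : Set E)] x) := by
    refine tendsto_nhdsWithin_iff.2 ⟨Continuous.tendsto' (by fun_prop) _ _ (by simp),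
      Eventually.of_forall fun t => ?_⟩
    simpa [vsub_eq_sub, vadd_eq_add, add_comm] using
      AffineSubspace.smul_vsub_vadd_mem _ t hxA (subset_affineSpan ℝ s hy) hxA
  exact (eventually_mem_nhdsWithin.and
    ((hline.eventually hs).filter_mono nhdsWithin_le_nhds) : ∀ᶠ t in 𝓝[>] (0 : ℝ), _).exists

theorem IsMinOn.eq_of_mem_intrinsicInterior {f : E →ₗ[ℝ] ℝ} (hf : IsMinOn f s x)
    (hx : x ∈ intrinsicInterior ℝ s) (hy : y ∈ s) : f y = f x := by
  obtain ⟨t, ht, hmem⟩ := exists_pos_add_smul_sub_mem_of_mem_intrinsicInterior hx hy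
  have h₁ : f x ≤ f (x + t • (x - y)) := hf hmem
  have h₂ : f x ≤ f y := hf hy
  rw [map_add, map_smul, map_sub, smul_eq_mul] at h₁
  nlinarith

namespace PointedCone

variable {C : PointedCone ℝ E}

theorem neg_mem_of_zero_mem_intrinsicInterior (h0 : (0 : E) ∈ intrinsicInterior ℝ (C : Set E))
    (hy : y ∈ C) : -y ∈ C := by
  obtain ⟨t, ht, hmem⟩ := exists_pos_add_smul_sub_mem_of_mem_intrinsicInterior h0 hy
  exact (C.smul_mem_iff ht).1 (by simpa using hmem)

theorem smul_mem_intrinsicInterior [FiniteDimensional ℝ E] {c : ℝ} (hc : 0 < c)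
    (hx : x ∈ intrinsicInterior ℝ (C : Set E)) : c • x ∈ intrinsicInterior ℝ (C : Set E) := by
  let φ := (LinearEquiv.smulOfNeZero ℝ E c hc.ne').toAffineEquiv
  have hφ : φ '' C = C := by
    ext y
    constructor
    · rintro ⟨z, hz, rfl⟩
      exact C.smul_mem hc.le hz
    · intro hy
      exact ⟨c⁻¹ • y, C.smul_mem (inv_nonneg.2 hc.le) hy, smul_inv_smul₀ hc.ne' y⟩
  rw [← hφ, AffineEquiv.intrinsicInterior_image]
  exact mem_image_of_mem φ hx

end PointedCone

end IntrinsicInterior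

section Support

variable {E : Type*} [NormedAddCommGroup E] [InnerProductSpace ℝ E] [FiniteDimensional ℝ E]
  {s : Set E} {x : E}

theorem Convex.exists_isMaxOn_inner_of_notMem_intrinsicInterior (hs : Convex ℝ s)
    (h0 : (0 : E) ∈ s) (hx : x ∈ s) (hx' : x ∉ intrinsicInterior ℝ s) :
    ∃ u : E, IsMaxOn (⟪u, ·⟫) s x ∧ ∃ y ∈ s, ⟪u, y⟫ < ⟪u, x⟫ := by
  set V := Submodule.span ℝ s
  have hV : (affineSpan ℝ s : Set E) = V := by rw [← affineSpan_insert_zero, insert_eq_of_mem h0]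
  let s' : Set V := (↑) ⁻¹' s
  have hrelint := fun z (hz : z ∈ V) =>
    mem_intrinsicInterior_iff_mem_interior_of_affineSpan_eq hV hz
  have hs' : Convex ℝ s' := hs.linear_preimage V.subtype
  obtain ⟨z, hz⟩ := Set.Nonempty.intrinsicInterior hs ⟨0, h0⟩
  have hzV : z ∈ V := Submodule.subset_span (intrinsicInterior_subset hz)
  have hxV : x ∈ V := Submodule.subset_span hx
  obtain ⟨f, hf⟩ := geometric_hahn_banach_open_point hs'.interior isOpen_interior
    ((hrelint x hxV).not.1 hx')
  have hle : s' ⊆ {y | f y ≤ f ⟨x, hxV⟩} := by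
    refine subset_closure.trans ?_
    rw [← hs'.closure_interior_eq_closure_of_nonempty_interior ⟨_, (hrelint z hzV).1 hz⟩]
    exact closure_minimal (fun y hy => (hf y hy).le) (isClosed_le f.continuous continuous_const)
  set u : V := (InnerProductSpace.toDual ℝ V).symm f
  have hu : ∀ y (hy : y ∈ V), ⟪(u : E), y⟫ = f ⟨y, hy⟩ := fun y hy => by
    rw [← InnerProductSpace.toDual_symm_apply, Submodule.coe_inner]
  refine ⟨u, fun y hy => ?_, z, intrinsicInterior_subset hz, ?_⟩
  · have hyV : y ∈ V := Submodule.subset_span hy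
    show ⟪(u : E), y⟫ ≤ ⟪(u : E), x⟫
    rw [hu y hyV, hu x hxV]
    exact hle (show (⟨y, hyV⟩ : V) ∈ s' from hy)
  · rw [hu z hzV, hu x hxV]
    exact hf _ ((hrelint z hzV).1 hz)

theorem PointedCone.exists_dual_inner_eq_zero_of_notMem_intrinsicInterior {C : PointedCone ℝ E}
    (hx : x ∈ C) (hx' : x ∉ intrinsicInterior ℝ (C : Set E)) :
    ∃ u : E, (∀ y ∈ C, 0 ≤ ⟪u, y⟫) ∧ ⟪u, x⟫ = 0 ∧ ∃ y ∈ C, 0 < ⟪u, y⟫ := by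
  obtain ⟨u, hmax, y, hy, hyx⟩ :=
    C.convex.exists_isMaxOn_inner_of_notMem_intrinsicInterior C.zero_mem hx hx'
  -- `0` and `2 • x` lie in `C`, which forces the maximum `⟪u, x⟫` to be `0`.
  have h0 : ⟪u, 0⟫ ≤ ⟪u, x⟫ := hmax C.zero_mem
  have h2 : ⟪u, (2 : ℝ) • x⟫ ≤ ⟪u, x⟫ := hmax (C.smul_mem zero_le_two hx)
  rw [inner_zero_right] at h0
  rw [inner_smul_right] at h2
  have hux : ⟪u, x⟫ = 0 := by linarith
  refine ⟨-u, fun z hz => ?_, by simp [hux], y, hy, by simpa [hux] using hyx⟩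
  have : ⟪u, z⟫ ≤ ⟪u, x⟫ := hmax hz
  simpa [hux] using this

end Support

section Fan

variable {n : ℕ} {σ τ : Set (Euc n)} {x : Euc n}

theorem IsRatPolyCone.exists_pointedCone (hσ : IsRatPolyCone σ) :
    ∃ C : PointedCone ℝ (Euc n), (C : Set (Euc n)) = σ := by
  obtain ⟨k, v, -, rfl⟩ := hσ
  refine ⟨PointedCone.hull ℝ (range v), Set.ext fun x => ?_⟩
  rw [SetLike.mem_coe, Submodule.mem_span_range_iff_exists_fun, mem_ofPred_eq]
  constructor
  · rintro ⟨c, rfl⟩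
    exact ⟨fun i => c i, fun i => (c i).2, rfl⟩
  · rintro ⟨lam, hlam, rfl⟩
    exact ⟨fun i => ⟨lam i, hlam i⟩, rfl⟩

theorem IsFaceOf.subset (h : IsFaceOf τ σ) : τ ⊆ σ := by
  obtain ⟨u, -, rfl⟩ := h
  exact inter_subset_left

theorem IsFaceOf.eq_of_mem_intrinsicInterior (h : IsFaceOf τ σ) (hxτ : x ∈ τ)
    (hx : x ∈ intrinsicInterior ℝ σ) : τ = σ := by
  obtain ⟨u, hu, rfl⟩ := h
  have hux : ⟪u, x⟫ = 0 := hxτ.2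
  have hmin : IsMinOn (innerₗ (Euc n) u) σ x := fun y hy => by
    simpa [hux] using hu y hy
  exact inter_eq_left.2 fun y hy => by simpa [hux] using hmin.eq_of_mem_intrinsicInterior hx hy

theorem IsRatPolyCone.exists_isFaceOf_ne_of_notMem_intrinsicInterior (hσ : IsRatPolyCone σ)
    (hx : x ∈ σ) (hx' : x ∉ intrinsicInterior ℝ σ) : ∃ τ, IsFaceOf τ σ ∧ τ ≠ σ ∧ x ∈ τ := by
  obtain ⟨C, rfl⟩ := hσ.exists_pointedCone
  obtain ⟨u, hu, hux, y, hy, huy⟩ :=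
    PointedCone.exists_dual_inner_eq_zero_of_notMem_intrinsicInterior hx hx'
  refine ⟨C ∩ {z | ⟪u, z⟫ = 0}, ⟨u, hu, rfl⟩, fun h => huy.ne' ?_, hx, hux⟩
  exact (h.symm ▸ hy : y ∈ (C : Set (Euc n)) ∩ {z | ⟪u, z⟫ = 0}).2

theorem IsRatPolyCone.nonempty_intrinsicInterior_inter_sphere (hσ : IsRatPolyCone σ)
    (hsc : IsStrictlyConvexCone σ) (hne : σ ≠ {0}) :
    (intrinsicInterior ℝ σ ∩ Metric.sphere (0 : Euc n) 1).Nonempty := by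
  obtain ⟨C, rfl⟩ := hσ.exists_pointedCone
  obtain ⟨x, hx⟩ := Set.Nonempty.intrinsicInterior C.convex ⟨0, C.zero_mem⟩
  have hx0 : x ≠ 0 := by
    rintro rfl
    refine hne (eq_singleton_iff_unique_mem.2 ⟨C.zero_mem, fun y hy => ?_⟩)
    have : y ∈ (C : Set (Euc n)) ∩ -(C : Set (Euc n)) :=
      ⟨hy, C.neg_mem_of_zero_mem_intrinsicInterior hx hy⟩
    rwa [hsc] at this
  exact ⟨‖x‖⁻¹ • x, C.smul_mem_intrinsicInterior (by positivity) hx, by simp [norm_smul, hx0]⟩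

theorem IsFan.eq_of_mem_intrinsicInterior {Δ : Set (Set (Euc n))} (hΔ : IsFan Δ) (hσ : σ ∈ Δ)
    (hτ : τ ∈ Δ) (hxσ : x ∈ intrinsicInterior ℝ σ) (hxτ : x ∈ intrinsicInterior ℝ τ) : σ = τ := by
  have hx : x ∈ σ ∩ τ := ⟨intrinsicInterior_subset hxσ, intrinsicInterior_subset hxτ⟩
  obtain ⟨hfσ, hfτ⟩ := hΔ.inter_face σ hσ τ hτ
  rw [← hfσ.eq_of_mem_intrinsicInterior hx hxσ, hfτ.eq_of_mem_intrinsicInterior hx hxτ]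

theorem IsFan.exists_mem_intrinsicInterior {Δ : Set (Set (Euc n))} (hΔ : IsFan Δ)
    (hx : x ∈ ⋃₀ Δ) : ∃ τ ∈ Δ, x ∈ intrinsicInterior ℝ τ := by
  obtain ⟨τ, hτ⟩ := (hΔ.finite.inter_of_left {σ | x ∈ σ}).exists_minimal hx
  refine ⟨τ, hτ.prop.1, by_contra fun hx' => ?_⟩
  obtain ⟨F, hF, hFτ, hxF⟩ :=
    (hΔ.poly τ hτ.prop.1).exists_isFaceOf_ne_of_notMem_intrinsicInterior hτ.prop.2 hx'
  exact hFτ (hτ.eq_of_le ⟨hΔ.face_mem τ hτ.prop.1 F hF, hxF⟩ hF.subset)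

end Fan

theorem fan_cells_decompose_sphere_general {n : ℕ}
    (Δ : Set (Set (Euc n))) (hΔ : IsCompleteFan Δ) :
    ((∀ σ ∈ Δ, σ ≠ {0} →
        (intrinsicInterior ℝ σ ∩ Metric.sphere (0 : Euc n) 1).Nonempty) ∧
      (∀ σ ∈ Δ, ∀ τ ∈ Δ, σ ≠ {0} → τ ≠ {0} → σ ≠ τ →
        (intrinsicInterior ℝ σ ∩ Metric.sphere (0 : Euc n) 1) ∩
          (intrinsicInterior ℝ τ ∩ Metric.sphere (0 : Euc n) 1) = ∅) ∧
      (⋃ σ ∈ {σ | σ ∈ Δ ∧ σ ≠ ({0} : Set (Euc n))},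
          intrinsicInterior ℝ σ ∩ Metric.sphere (0 : Euc n) 1) =
        Metric.sphere (0 : Euc n) 1) ∧
    (∀ σ ∈ Δ, σ ≠ {0} →
      (σ ∩ Metric.sphere (0 : Euc n) 1) \ intrinsicInterior ℝ σ =
        ⋃ τ ∈ {τ | IsFaceOf τ σ ∧ τ ≠ σ ∧ τ ≠ ({0} : Set (Euc n))},
          τ ∩ Metric.sphere (0 : Euc n) 1) := by
  obtain ⟨hfan, hcomplete⟩ := hΔ
  have hS : ∀ {τ : Set (Euc n)} {x}, x ∈ τ → x ∈ Metric.sphere (0 : Euc n) 1 → τ ≠ {0} := by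
    rintro τ x hxτ hx rfl
    simp_all
  refine ⟨⟨fun σ hσ hne => (hfan.poly σ hσ).nonempty_intrinsicInterior_inter_sphere
    (hfan.strictconv σ hσ) hne, ?_, ?_⟩, ?_⟩
  · intro σ hσ τ hτ _ _ hστ
    exact eq_empty_of_forall_notMem fun x ⟨⟨hxσ, _⟩, hxτ, _⟩ =>
      hστ (hfan.eq_of_mem_intrinsicInterior hσ hτ hxσ hxτ)
  · refine Subset.antisymm (iUnion₂_subset fun _ _ => inter_subset_right) fun x hx => ?_
    obtain ⟨τ, hτ, hxτ⟩ := hfan.exists_mem_intrinsicInterior (hcomplete ▸ mem_univ x)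
    exact mem_iUnion₂.2 ⟨τ, ⟨hτ, hS (intrinsicInterior_subset hxτ) hx⟩, hxτ, hx⟩
  · intro σ hσ _
    ext x
    simp only [Set.mem_sdiff, mem_inter_iff, mem_iUnion₂, mem_ofPred_eq, exists_prop]
    constructor
    · rintro ⟨⟨hxσ, hx⟩, hx'⟩
      obtain ⟨τ, hτ, hτσ, hxτ⟩ :=
        (hfan.poly σ hσ).exists_isFaceOf_ne_of_notMem_intrinsicInterior hxσ hx'
      exact ⟨τ, ⟨hτ, hτσ, hS hxτ hx⟩, hxτ, hx⟩
    · rintro ⟨τ, ⟨hτ, hτσ, -⟩, hxτ, hx⟩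
      exact ⟨⟨hτ.subset hxτ, hx⟩, fun hx' => hτσ (hτ.eq_of_mem_intrinsicInterior hxτ hx')⟩

/-- For a complete fan `Δ` in `ℝ^n` (`n ≥ 1`), the cells
`e_σ = σ ∩ S` form a cellular decomposition of the unit sphere `S`:
(i) the relative interiors of the nonzero cones meet `S` in nonempty sets,
pairwise disjoint for distinct cones, covering `S`; (ii) the boundary
`(σ ∩ S) ∖ relint σ` of a cell is the union of the cells of the nonzero
proper faces of `σ`. -/
theorem fan_cells_decompose_sphere {n : ℕ} (hn : 1 ≤ n)
    (Δ : Set (Set (Euc n))) (hΔ : IsCompleteFan Δ) :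
    ((∀ σ ∈ Δ, σ ≠ {0} →
        (intrinsicInterior ℝ σ ∩ Metric.sphere (0 : Euc n) 1).Nonempty) ∧
      (∀ σ ∈ Δ, ∀ τ ∈ Δ, σ ≠ {0} → τ ≠ {0} → σ ≠ τ →
        (intrinsicInterior ℝ σ ∩ Metric.sphere (0 : Euc n) 1) ∩
          (intrinsicInterior ℝ τ ∩ Metric.sphere (0 : Euc n) 1) = ∅) ∧
      (⋃ σ ∈ {σ | σ ∈ Δ ∧ σ ≠ ({0} : Set (Euc n))},
          intrinsicInterior ℝ σ ∩ Metric.sphere (0 : Euc n) 1) =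
        Metric.sphere (0 : Euc n) 1) ∧
    (∀ σ ∈ Δ, σ ≠ {0} →
      (σ ∩ Metric.sphere (0 : Euc n) 1) \ intrinsicInterior ℝ σ =
        ⋃ τ ∈ {τ | IsFaceOf τ σ ∧ τ ≠ σ ∧ τ ≠ ({0} : Set (Euc n))},
          τ ∩ Metric.sphere (0 : Euc n) 1) :=
  fan_cells_decompose_sphere_general Δ hΔ

end
end

section
/- Let k be a field, σ ⊂ ℝ^n a strictly convex rational polyhedral cone, and τ a face of σ. Then σ^∨ ∩ ℤ^n ⊆ τ^∨ ∩ ℤ^n, and the morphism of affine schemes Spec k[τ^∨ ∩ ℤ^n] → Spec k[σ^∨ ∩ ℤ^n] induced by the inclusion of monoid algebras k[σ^∨ ∩ ℤ^n] → k[τ^∨ ∩ ℤ^n] is an open immersion. -/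
open scoped RealInnerProductSpace

noncomputable section

/-- The real vector of `ℝ^n` associated to an integer vector of `ℤ^n`. -/
def toRealVec {n : ℕ} (v : Fin n → ℤ) : Euc n := WithLp.toLp 2 (fun i => (v i : ℝ))

lemma toRealVec_zero {n : ℕ} : toRealVec (0 : Fin n → ℤ) = 0 := by
  ext i; simp [toRealVec]

lemma toRealVec_add {n : ℕ} (v w : Fin n → ℤ) :
    toRealVec (v + w) = toRealVec v + toRealVec w := by
  ext i
  show ((v i + w i : ℤ) : ℝ) = toRealVec v i + toRealVec w i
  push_cast
  rfl

/-- The monoid `S = σ^∨ ∩ ℤ^n` of lattice points of the dual cone. -/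
def dualLatticeMonoid {n : ℕ} (σ : Set (Euc n)) : AddSubmonoid (Fin n → ℤ) where
  carrier := {v | toRealVec v ∈ dualCone σ}
  zero_mem' := by
    intro x hx
    rw [toRealVec_zero, inner_zero_left]
  add_mem' := by
    intro v w hv hw x hx
    rw [toRealVec_add, inner_add_left]
    exact add_nonneg (hv x hx) (hw x hx)

/-- The monoid `S⊥ = σ^⊥ ∩ ℤ^n` of lattice points of the orthogonal of `σ`. -/
def orthLatticeMonoid {n : ℕ} (σ : Set (Euc n)) : AddSubmonoid (Fin n → ℤ) where
  carrier := {v | toRealVec v ∈ orthCone σ}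
  zero_mem' := by
    intro x hx
    rw [toRealVec_zero, inner_zero_left]
  add_mem' := by
    intro v w hv hw x hx
    rw [toRealVec_add, inner_add_left, hv x hx, hw x hx, add_zero]

lemma orthLatticeMonoid_le_dualLatticeMonoid {n : ℕ} (σ : Set (Euc n)) :
    orthLatticeMonoid σ ≤ dualLatticeMonoid σ :=
  fun _ hv x hx => (hv x hx).ge


/-!
Write `σ` as the cone over integral vectors `vᵢ` and `τ = σ ∩ u^⊥` with `u ∈ σ^∨`. The linear
conditions `⟪z, vᵢ⟫ = 0` for `⟪u, vᵢ⟫ = 0` have rational coefficients, so their rational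
solutions span the real ones (a rank is unchanged by extending scalars) and are dense in them.
A rational solution close to `u` keeps `⟪z, vᵢ⟫ > 0` for the other generators, and clearing
denominators gives a lattice point `z ∈ σ^∨ ∩ τ^⊥`. Every `w ∈ τ^∨ ∩ ℤ^n` then satisfies
`w + m z ∈ σ^∨` for `m ≫ 0`, so `τ^∨ ∩ ℤ^n = σ^∨ ∩ ℤ^n + ℕ (-z)` and `k[τ^∨ ∩ ℤ^n]` is the
localization of `k[σ^∨ ∩ ℤ^n]` at `χ^z`.
-/

open Matrix

section FieldExtension

variable {K L ι : Type*} [Field K] [Field L] [Algebra K L]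

theorem span_image_span_piAlgebraMap (s : Set (ι → K)) :
    Submodule.span L (Pi.algebraMap ι K L '' Submodule.span K s) =
      Submodule.span L (Pi.algebraMap ι K L '' s) := by
  rw [← Submodule.map_coe, Submodule.map_span, Submodule.span_span_of_tower]

theorem finrank_span_image_piAlgebraMap [Finite ι] (s : Set (ι → K)) :
    Module.finrank L (Submodule.span L (Pi.algebraMap ι K L '' s)) =
      Module.finrank K (Submodule.span K s) := by
  set P := Submodule.span K s
  let b := Module.finBasis K P
  have hb : Submodule.span K (Set.range fun i => (b i : ι → K)) = P := by
    rw [Set.range_comp' Subtype.val, ← Submodule.coe_subtype, Submodule.span_image, b.span_eq,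
      Submodule.map_top, Submodule.range_subtype]
  have hli : LinearIndependent L fun i => Pi.algebraMap ι K L (b i) :=
    linearIndependent_algebraMap_comp_iff.mpr (b.linearIndependent.map' P.subtype P.ker_subtype)
  calc Module.finrank L (Submodule.span L (Pi.algebraMap ι K L '' s))
      = Module.finrank L (Submodule.span L
          (Pi.algebraMap ι K L '' Submodule.span K (Set.range fun i => (b i : ι → K)))) := by
        rw [hb, span_image_span_piAlgebraMap]
    _ = Module.finrank K P := by
        rw [span_image_span_piAlgebraMap, ← Set.range_comp]
        exact (finrank_span_eq_card hli).trans (Fintype.card_fin _)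

variable {m : Type*} [Fintype ι]

theorem Matrix.map_algebraMap_mulVec (A : Matrix m ι K) (y : ι → K) :
    A.map (algebraMap K L) *ᵥ Pi.algebraMap ι K L y = Pi.algebraMap m K L (A *ᵥ y) := by
  ext i
  exact (RingHom.map_mulVec (algebraMap K L) A y i).symm

variable [Finite m]

theorem Matrix.rank_map_algebraMap (A : Matrix m ι K) :
    (A.map (algebraMap K L)).rank = A.rank := by
  rw [rank_eq_finrank_span_cols, rank_eq_finrank_span_cols,
    ← finrank_span_image_piAlgebraMap (L := L) (Set.range A.col), ← Set.range_comp]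
  rfl

theorem Matrix.ker_mulVecLin_map_algebraMap (A : Matrix m ι K) :
    LinearMap.ker (A.map (algebraMap K L)).mulVecLin =
      Submodule.span L (Pi.algebraMap ι K L '' LinearMap.ker A.mulVecLin) := by
  have hle : Submodule.span L (Pi.algebraMap ι K L '' LinearMap.ker A.mulVecLin) ≤
      LinearMap.ker (A.map (algebraMap K L)).mulVecLin := by
    rw [Submodule.span_le]
    rintro _ ⟨y, hy, rfl⟩
    simp_all [Matrix.map_algebraMap_mulVec]
  refine (Submodule.eq_of_le_of_finrank_eq hle ?_).symm
  have hK := LinearMap.finrank_range_add_finrank_ker A.mulVecLin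
  have hL := LinearMap.finrank_range_add_finrank_ker (A.map (algebraMap K L)).mulVecLin
  change A.rank + _ = _ at hK
  change (A.map (algebraMap K L)).rank + _ = _ at hL
  rw [finrank_span_image_piAlgebraMap, Submodule.span_eq]
  simp only [rank_map_algebraMap, Module.finrank_fintype_fun_eq_card] at hK hL
  omega

end FieldExtension

theorem Submodule.span_real_subset_closure_span_rat {E : Type*} [AddCommGroup E] [Module ℝ E]
    [Module ℚ E] [TopologicalSpace E] [ContinuousAdd E]
    [ContinuousSMul ℝ E] (s : Set E) :
    (span ℝ s : Set E) ⊆ closure (span ℚ s) := by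
  let C : Submodule ℝ E :=
    { carrier := closure (span ℚ s)
      zero_mem' := subset_closure (zero_mem _)
      add_mem' := fun hx hy =>
        map_mem_closure₂ continuous_add hx hy fun a ha b hb => add_mem ha hb
      smul_mem' := fun c x hx =>
        map_mem_closure₂ continuous_smul (Rat.denseRange_cast c) hx fun _ ⟨q, hq⟩ b hb => by
          rw [← hq, ratCast_smul_eq ℝ ℚ, Rat.cast_id]
          exact smul_mem _ q hb }
  exact span_le (p := C).2 fun x hx => subset_closure (subset_span hx)

theorem Matrix.exists_rat_mulVec_eq_zero_and_pos {m m' n : Type*} [Finite m] [Finite m']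
    [Fintype n] (A : Matrix m n ℚ) (B : Matrix m' n ℚ) (x : n → ℝ)
    (hA : A.map (↑) *ᵥ x = 0) (hB : ∀ i, 0 < (B.map (↑) *ᵥ x) i) :
    ∃ y : n → ℚ, A *ᵥ y = 0 ∧ ∀ i, 0 < (B *ᵥ y) i := by
  have hcast : (algebraMap ℚ ℝ : ℚ → ℝ) = (↑) := rfl
  set U : Set (n → ℝ) := {x | ∀ i, 0 < (B.map (↑) *ᵥ x) i}
  have hU : IsOpen U := by
    simp only [U, Set.ofPred_forall]
    exact isOpen_iInter_of_finite fun i => isOpen_lt continuous_const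
      ((continuous_apply i).comp (continuous_const.matrix_mulVec continuous_id))
  have hx : x ∈ closure (Pi.algebraMap n ℚ ℝ '' LinearMap.ker A.mulVecLin) := by
    have hker := (A.ker_mulVecLin_map_algebraMap (L := ℝ)).le (x := x) (by rwa [hcast])
    have := Submodule.span_real_subset_closure_span_rat _ hker
    rwa [← Submodule.map_coe, Submodule.span_eq] at this
  obtain ⟨_, hyU, y, hy, rfl⟩ := mem_closure_iff.1 hx U hU hB
  refine ⟨y, hy, fun i => ?_⟩
  have := hyU i
  rw [← hcast, Matrix.map_algebraMap_mulVec] at this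
  exact Rat.cast_pos.1 this

theorem exists_pos_nat_smul_eq_intCast {n : Type*} [Fintype n] (y : n → ℚ) :
    ∃ (d : ℕ) (z : n → ℤ), 0 < d ∧ d • y = fun j => (z j : ℚ) := by
  classical
  refine ⟨∏ j, (y j).den, fun j => (∏ j' ∈ Finset.univ.erase j, ((y j').den : ℤ)) * (y j).num,
    Finset.prod_pos fun j _ => (y j).den_pos, funext fun j => ?_⟩
  rw [Pi.smul_apply, nsmul_eq_mul, ← Finset.prod_erase_mul _ _ (Finset.mem_univ j)]
  push_cast
  rw [mul_assoc, Rat.den_mul_eq_num]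

theorem Matrix.exists_int_mulVec_eq_zero_and_pos {m m' n : Type*} [Finite m] [Finite m']
    [Fintype n] (A : Matrix m n ℤ) (B : Matrix m' n ℤ) (x : n → ℝ)
    (hA : A.map (↑) *ᵥ x = 0) (hB : ∀ i, 0 < (B.map (↑) *ᵥ x) i) :
    ∃ z : n → ℤ, A *ᵥ z = 0 ∧ ∀ i, 0 < (B *ᵥ z) i := by
  obtain ⟨y, hyA, hyB⟩ := exists_rat_mulVec_eq_zero_and_pos (A.map (↑)) (B.map (↑)) x
    (by simpa [Matrix.map_map, Function.comp_def] using hA)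
    (by simpa [Matrix.map_map, Function.comp_def] using hB)
  obtain ⟨d, z, hd, hz⟩ := exists_pos_nat_smul_eq_intCast y
  have hAz : A.map (↑) *ᵥ (fun j => (z j : ℚ)) = 0 := by rw [← hz, mulVec_smul, hyA, smul_zero]
  have hBz : B.map (↑) *ᵥ (fun j => (z j : ℚ)) = d • (B.map (↑) *ᵥ y) := by rw [← hz, mulVec_smul]
  refine ⟨z, funext fun i => ?_, fun i => ?_⟩
  · have := (RingHom.map_mulVec (Int.castRingHom ℚ) A z i).trans (congrFun hAz i)
    rwa [eq_intCast, Pi.zero_apply, Int.cast_eq_zero] at this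
  · have := (RingHom.map_mulVec (Int.castRingHom ℚ) B z i).trans (congrFun hBz i)
    rw [eq_intCast, Pi.smul_apply, nsmul_eq_mul] at this
    exact Int.cast_pos.1 (this ▸ mul_pos (Nat.cast_pos.2 hd) (hyB i))

section Cone

variable {n : ℕ}

theorem mem_dualLatticeMonoid {σ : Set (Euc n)} {w : Fin n → ℤ} :
    w ∈ dualLatticeMonoid σ ↔ toRealVec w ∈ dualCone σ :=
  Iff.rfl

theorem dualLatticeMonoid_antitone : Antitone (dualLatticeMonoid (n := n)) :=
  fun _ _ hστ _ hw x hx => hw x (hστ hx)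

theorem toRealVec_neg (z : Fin n → ℤ) : toRealVec (-z) = -toRealVec z := by
  ext; simp [toRealVec]

theorem toRealVec_nsmul (m : ℕ) (z : Fin n → ℤ) : toRealVec (m • z) = m • toRealVec z := by
  ext; simp [toRealVec]

theorem inner_toRealVec (x : Euc n) (w : Fin n → ℤ) :
    ⟪x, toRealVec w⟫ = (fun j => (w j : ℝ)) ⬝ᵥ x.ofLp := by
  simp [EuclideanSpace.inner_eq_star_dotProduct, toRealVec]

theorem inner_toRealVec_toRealVec (z w : Fin n → ℤ) :
    ⟪toRealVec z, toRealVec w⟫ = ((w ⬝ᵥ z : ℤ) : ℝ) := by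
  rw [inner_toRealVec]
  simp [toRealVec, dotProduct]

theorem exists_int_inner_sign_pattern {ι : Type*} [Finite ι] (V : ι → Fin n → ℤ) (u : Euc n) :
    ∃ z : Fin n → ℤ, (∀ i, ⟪u, toRealVec (V i)⟫ = 0 → ⟪toRealVec z, toRealVec (V i)⟫ = 0) ∧
      ∀ i, 0 < ⟪u, toRealVec (V i)⟫ → 0 < ⟪toRealVec z, toRealVec (V i)⟫ := by
  obtain ⟨z, hzA, hzB⟩ := Matrix.exists_int_mulVec_eq_zero_and_pos
    (Matrix.of fun i : {i // ⟪u, toRealVec (V i)⟫ = 0} => V i)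
    (Matrix.of fun i : {i // 0 < ⟪u, toRealVec (V i)⟫} => V i) u.ofLp
    (funext fun i => by simpa [mulVec, inner_toRealVec] using i.2)
    (fun i => by simpa [mulVec, inner_toRealVec] using i.2)
  refine ⟨z, fun i hi => ?_, fun i hi => ?_⟩
  · simpa [mulVec, inner_toRealVec_toRealVec] using congrFun hzA ⟨i, hi⟩
  · simpa [mulVec, inner_toRealVec_toRealVec] using hzB ⟨i, hi⟩

def polyCone {ι : Type*} [Fintype ι] (v : ι → Euc n) : Set (Euc n) :=
  {x | ∃ lam : ι → ℝ, (∀ i, 0 ≤ lam i) ∧ x = ∑ i, lam i • v i}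

variable {ι : Type*} [Fintype ι] {v : ι → Euc n}

theorem mem_polyCone_self (i : ι) : v i ∈ polyCone v := by
  classical
  exact ⟨Pi.single i 1, fun j => by by_cases h : j = i <;> simp [h],
    by simp [Pi.single_apply, ite_smul]⟩

theorem inner_sum_smul (w : Euc n) (lam : ι → ℝ) :
    ⟪w, ∑ i, lam i • v i⟫ = ∑ i, lam i * ⟪w, v i⟫ := by
  simp [inner_sum, real_inner_smul_right]

theorem mem_dualCone_polyCone {w : Euc n} : w ∈ dualCone (polyCone v) ↔ ∀ i, 0 ≤ ⟪w, v i⟫ := by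
  refine ⟨fun hw i => hw _ (mem_polyCone_self i), ?_⟩
  rintro h _ ⟨lam, hlam, rfl⟩
  rw [inner_sum_smul]
  exact Finset.sum_nonneg fun i _ => mul_nonneg (hlam i) (h i)

theorem mem_dualCone_polyCone_inter {u w : Euc n} (hu : u ∈ dualCone (polyCone v)) :
    w ∈ dualCone (polyCone v ∩ {x | ⟪u, x⟫ = 0}) ↔ ∀ i, ⟪u, v i⟫ = 0 → 0 ≤ ⟪w, v i⟫ := by
  refine ⟨fun hw i hi => hw _ ⟨mem_polyCone_self i, hi⟩, ?_⟩
  rintro h _ ⟨⟨lam, hlam, rfl⟩, hx⟩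
  have hterm : ∀ i, lam i * ⟪u, v i⟫ = 0 := by
    rw [Set.mem_ofPred_eq, inner_sum_smul] at hx
    exact fun i => (Finset.sum_eq_zero_iff_of_nonneg fun i _ =>
      mul_nonneg (hlam i) (mem_dualCone_polyCone.1 hu i)).1 hx i (Finset.mem_univ i)
  rw [inner_sum_smul]
  refine Finset.sum_nonneg fun i _ => ?_
  rcases mul_eq_zero.1 (hterm i) with hi | hi
  · simp [hi]
  · exact mul_nonneg (hlam i) (h i hi)

theorem exists_add_nsmul_mem_dualCone_polyCone {u z w : Euc n}
    (hz0 : ∀ i, ⟪u, v i⟫ = 0 → ⟪z, v i⟫ = 0) (hzpos : ∀ i, ⟪u, v i⟫ ≠ 0 → 0 < ⟪z, v i⟫)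
    (hw : ∀ i, ⟪u, v i⟫ = 0 → 0 ≤ ⟪w, v i⟫) :
    ∃ m : ℕ, w + m • z ∈ dualCone (polyCone v) := by
  have : ∀ᶠ m : ℕ in Filter.atTop, ∀ i, 0 ≤ ⟪w, v i⟫ + m * ⟪z, v i⟫ := by
    refine Filter.eventually_all.2 fun i => ?_
    by_cases hi : ⟪u, v i⟫ = 0
    · exact Filter.Eventually.of_forall fun m => by simpa [hz0 i hi] using hw i hi
    · exact (Filter.tendsto_atTop_add_const_left _ _
        (tendsto_natCast_atTop_atTop.atTop_mul_const (hzpos i hi))).eventually_ge_atTop 0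
  obtain ⟨m, hm⟩ := this.exists
  refine ⟨m, mem_dualCone_polyCone.2 fun i => ?_⟩
  rw [inner_add_left, ← Nat.cast_smul_eq_nsmul ℝ, real_inner_smul_left]
  exact hm i

theorem IsRatPolyCone.exists_dualLatticeMonoid_away {σ : Set (Euc n)} (hσ : IsRatPolyCone σ)
    {u : Euc n} (hu : u ∈ dualCone σ) :
    ∃ z ∈ dualLatticeMonoid σ, -z ∈ dualLatticeMonoid (σ ∩ {x | ⟪u, x⟫ = 0}) ∧
      ∀ w ∈ dualLatticeMonoid (σ ∩ {x | ⟪u, x⟫ = 0}), ∃ m : ℕ, w + m • z ∈ dualLatticeMonoid σ := by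
  obtain ⟨k, v, hv, rfl⟩ := hσ
  choose V hV using hv
  obtain rfl : v = fun i => toRealVec (V i) := funext fun i => by ext j; exact hV i j
  change u ∈ dualCone (polyCone _) at hu
  obtain ⟨z, hz0, hz⟩ := exists_int_inner_sign_pattern V u
  have hzpos : ∀ i, ⟪u, toRealVec (V i)⟫ ≠ 0 → 0 < ⟪toRealVec z, toRealVec (V i)⟫ :=
    fun i hi => hz i ((mem_dualCone_polyCone.1 hu i).lt_of_ne' hi)
  refine ⟨z, mem_dualCone_polyCone.2 fun i => ?_, (mem_dualCone_polyCone_inter hu).2 fun i hi => ?_,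
    fun w hw => ?_⟩
  · by_cases hi : ⟪u, toRealVec (V i)⟫ = 0
    exacts [(hz0 i hi).ge, (hzpos i hi).le]
  · rw [toRealVec_neg, inner_neg_left, hz0 i hi, neg_zero]
  · obtain ⟨m, hm⟩ :=
      exists_add_nsmul_mem_dualCone_polyCone hz0 hzpos ((mem_dualCone_polyCone_inter hu).1 hw)
    exact ⟨m, by rwa [mem_dualLatticeMonoid, toRealVec_add, toRealVec_nsmul]⟩

end Cone

section MonoidAlgebra

open AddMonoidAlgebra

variable {R M : Type*} [CommSemiring R] [AddCommGroup M] {S T : AddSubmonoid M}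

theorem AddMonoidAlgebra.isLocalizationAway_mapDomain_inclusion (h : S ≤ T) (z : S)
    (hz : -(z : M) ∈ T) (hT : ∀ w ∈ T, ∃ m : ℕ, w + m • (z : M) ∈ S) :
    letI := (mapDomainRingHom R (AddSubmonoid.inclusion h)).toAlgebra
    IsLocalization.Away (single z (1 : R)) (AddMonoidAlgebra R T) := by
  let := (mapDomainRingHom R (AddSubmonoid.inclusion h)).toAlgebra
  have halg (a : S) (r : R) : algebraMap _ (AddMonoidAlgebra R T) (single a r) =
      single (AddSubmonoid.inclusion h a) r :=
    mapDomain_single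
  refine IsLocalization.Away.mk _ ?_ (fun s => ?_) fun a b hab => ⟨0, ?_⟩
  · refine IsUnit.of_mul_eq_one (single ⟨-z, hz⟩ 1) ?_
    rw [halg, single_mul_single, mul_one]
    congr
    ext
    simp
  · induction s using AddMonoidAlgebra.induction_linear with
    | zero => exact ⟨0, 0, by simp⟩
    | add s₁ s₂ h₁ h₂ =>
      obtain ⟨m₁, a₁, h₁⟩ := h₁
      obtain ⟨m₂, a₂, h₂⟩ := h₂
      refine ⟨m₁ + m₂, a₁ * single z 1 ^ m₂ + a₂ * single z 1 ^ m₁, ?_⟩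
      simp only [map_add, map_mul, map_pow, ← h₁, ← h₂]
      ring
    | single w r =>
      obtain ⟨m, hm⟩ := hT w w.2
      refine ⟨m, single ⟨_, hm⟩ r, ?_⟩
      rw [halg, halg, single_pow, single_mul_single, one_pow, mul_one]
      rfl
  · rw [mapDomain_injective (AddSubmonoid.inclusion_injective h) hab]

end MonoidAlgebra

open AlgebraicGeometry in
theorem face_inclusion_is_open_immersion_general {n : ℕ} (𝕜 : Type) [Field 𝕜]
    (σ τ : Set (Euc n)) (hσ : IsRatPolyCone σ)
    (hτ : IsFaceOf τ σ) :
    dualLatticeMonoid σ ≤ dualLatticeMonoid τ ∧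
    ∀ h : dualLatticeMonoid σ ≤ dualLatticeMonoid τ,
      IsOpenImmersion (Spec.map (CommRingCat.ofHom
        (AddMonoidAlgebra.mapDomainRingHom 𝕜 (AddSubmonoid.inclusion h)))) := by
  obtain ⟨u, hu, rfl⟩ := hτ
  refine ⟨dualLatticeMonoid_antitone Set.inter_subset_left, fun h => ?_⟩
  obtain ⟨z, hzσ, hzτ, hT⟩ := hσ.exists_dualLatticeMonoid_away hu
  let := (AddMonoidAlgebra.mapDomainRingHom 𝕜 (AddSubmonoid.inclusion h)).toAlgebra
  have := AddMonoidAlgebra.isLocalizationAway_mapDomain_inclusion (R := 𝕜) h ⟨z, hzσ⟩ hzτ hT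
  exact IsOpenImmersion.of_isLocalization (AddMonoidAlgebra.single ⟨z, hzσ⟩ 1)

open AlgebraicGeometry in
/-- If `τ` is a face of a strictly convex rational
polyhedral cone `σ ⊆ ℝ^n`, then `σ^∨ ∩ ℤ^n ⊆ τ^∨ ∩ ℤ^n`, and the induced
morphism of affine schemes `Spec k[τ^∨ ∩ ℤ^n] → Spec k[σ^∨ ∩ ℤ^n]` is an
open immersion. -/
theorem face_inclusion_is_open_immersion {n : ℕ} (𝕜 : Type) [Field 𝕜]
    (σ τ : Set (Euc n)) (hσ : IsRatPolyCone σ) (hconv : IsStrictlyConvexCone σ)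
    (hτ : IsFaceOf τ σ) :
    dualLatticeMonoid σ ≤ dualLatticeMonoid τ ∧
    ∀ h : dualLatticeMonoid σ ≤ dualLatticeMonoid τ,
      IsOpenImmersion (Spec.map (CommRingCat.ofHom
        (AddMonoidAlgebra.mapDomainRingHom 𝕜 (AddSubmonoid.inclusion h)))) :=
  face_inclusion_is_open_immersion_general 𝕜 σ τ hσ hτ

end
end
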